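/- Let (X, d_X) and (Y, d_Y) be compact metric spaces. If there exist maps Φ : X → Y and Ψ : Y → X which are both surjective and 1-Lipschitz, then (X, d_X) and (Y, d_Y) are isometric. -/
import Mathlib


open Metric Filter Topology ENNReal

noncomputable section

/-- A surjective 1-Lipschitz self-map of a compact metric space is an isometry. -/
lemma isometry_of_surjective_lipschitzWith_one
    {X : Type} [MetricSpace X] [CompactSpace X]
    (f : X → X) (hsurj : Function.Surjective f) (hlip : LipschitzWith 1 f) :
    Isometry f := by
  have hdist : ∀ u v : X, dist (f u) (f v) ≤ dist u v := fun u v => by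
    have := hlip.dist_le_mul u v
    simpa using this
  have hiter : ∀ (n : ℕ) (u v : X), dist (f^[n] u) (f^[n] v) ≤ dist u v := by
    intro n u v
    induction n with
    | zero => simp
    | succ k ih =>
      rw [Function.iterate_succ', Function.comp_apply, Function.comp_apply]
      exact le_trans (hdist _ _) ih
  apply Isometry.of_dist_eq
  intro x y
  refine le_antisymm (hdist x y) ?_
  -- backward orbits
  set g : X → X := Function.surjInv hsurj with hg
  set a : ℕ → X := fun n => g^[n] x with ha
  set b : ℕ → X := fun n => g^[n] y with hb
  have hfa : ∀ m, f (a (m + 1)) = a m := by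
    intro m
    simp only [ha, Function.iterate_succ', Function.comp_apply]
    exact Function.surjInv_eq hsurj _
  have hfb : ∀ m, f (b (m + 1)) = b m := by
    intro m
    simp only [hb, Function.iterate_succ', Function.comp_apply]
    exact Function.surjInv_eq hsurj _
  have keya : ∀ (k n : ℕ), f^[k] (a (n + k)) = a n := by
    intro k
    induction k with
    | zero => simp
    | succ j ih =>
      intro n
      rw [Function.iterate_succ, Function.comp_apply]
      have : n + (j + 1) = (n + j) + 1 := by ring
      rw [this, hfa (n + j)]
      exact ih n
  have keyb : ∀ (k n : ℕ), f^[k] (b (n + k)) = b n := by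
    intro k
    induction k with
    | zero => simp
    | succ j ih =>
      intro n
      rw [Function.iterate_succ, Function.comp_apply]
      have : n + (j + 1) = (n + j) + 1 := by ring
      rw [this, hfb (n + j)]
      exact ih n
  have Dmono : ∀ m n : ℕ, m ≤ n → dist (a m) (b m) ≤ dist (a n) (b n) := by
    intro m n hmn
    have h1 : f^[n - m] (a (m + (n - m))) = a m := keya (n - m) m
    have h2 : f^[n - m] (b (m + (n - m))) = b m := keyb (n - m) m
    have hmn' : m + (n - m) = n := by omega
    rw [hmn'] at h1 h2
    calc dist (a m) (b m) = dist (f^[n - m] (a n)) (f^[n - m] (b n)) := by rw [h1, h2]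
      _ ≤ dist (a n) (b n) := hiter _ _ _
  -- sequential compactness
  refine le_of_forall_pos_le_add ?_
  intro ε hε
  set p : ℕ → X × X := fun n => (a n, b n) with hp
  obtain ⟨q, -, φ, hφ, hconv⟩ :=
    isCompact_univ.tendsto_subseq (x := p) (fun n => Set.mem_univ _)
  have hcauchy : CauchySeq (p ∘ φ) := hconv.cauchySeq
  obtain ⟨N, hN⟩ := Metric.cauchySeq_iff.1 hcauchy (ε / 2) (by linarith)
  have hlt : φ N < φ (N + 1) := hφ (Nat.lt_succ_self N)
  set m : ℕ := φ (N + 1) - φ N with hm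
  have hm1 : 1 ≤ m := by omega
  have hmadd : m + φ N = φ (N + 1) := by omega
  have hpd : dist (p (φ (N + 1))) (p (φ N)) < ε / 2 :=
    hN (N + 1) (Nat.le_succ N) N le_rfl
  have hda : dist (a (φ (N + 1))) (a (φ N)) < ε / 2 := by
    refine lt_of_le_of_lt ?_ hpd
    rw [Prod.dist_eq]
    exact le_max_left _ _
  have hdb : dist (b (φ (N + 1))) (b (φ N)) < ε / 2 := by
    refine lt_of_le_of_lt ?_ hpd
    rw [Prod.dist_eq]
    exact le_max_right _ _
  have hax : dist (a m) (a 0) < ε / 2 := by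
    have h1 : f^[φ N] (a (m + φ N)) = a m := keya _ _
    have h2 : f^[φ N] (a (0 + φ N)) = a 0 := keya _ _
    rw [hmadd] at h1
    rw [Nat.zero_add] at h2
    calc dist (a m) (a 0) = dist (f^[φ N] (a (φ (N + 1)))) (f^[φ N] (a (φ N))) := by
          rw [h1, h2]
      _ ≤ dist (a (φ (N + 1))) (a (φ N)) := hiter _ _ _
      _ < ε / 2 := hda
  have hbx : dist (b m) (b 0) < ε / 2 := by
    have h1 : f^[φ N] (b (m + φ N)) = b m := keyb _ _
    have h2 : f^[φ N] (b (0 + φ N)) = b 0 := keyb _ _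
    rw [hmadd] at h1
    rw [Nat.zero_add] at h2
    calc dist (b m) (b 0) = dist (f^[φ N] (b (φ (N + 1)))) (f^[φ N] (b (φ N))) := by
          rw [h1, h2]
      _ ≤ dist (b (φ (N + 1))) (b (φ N)) := hiter _ _ _
      _ < ε / 2 := hdb
  -- finish
  obtain ⟨j, hj⟩ : ∃ j, m = j + 1 := ⟨m - 1, by omega⟩
  have ha0 : a 0 = x := by simp [ha]
  have hb0 : b 0 = y := by simp [hb]
  have hfaj : a j = f (a m) := by rw [hj]; exact (hfa j).symm
  have hfbj : b j = f (b m) := by rw [hj]; exact (hfb j).symm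
  have h1 : dist (a j) (f x) < ε / 2 := by
    rw [hfaj, ← ha0]
    exact lt_of_le_of_lt (hdist _ _) hax
  have h2 : dist (f y) (b j) < ε / 2 := by
    rw [hfbj, ← hb0, dist_comm]
    exact lt_of_le_of_lt (hdist _ _) hbx
  have h3 : dist x y ≤ dist (a j) (b j) := by
    rw [← ha0, ← hb0]; exact Dmono 0 j (Nat.zero_le j)
  have h4 : dist (a j) (b j) ≤ dist (a j) (f x) + dist (f x) (f y) + dist (f y) (b j) :=
    dist_triangle4 _ _ _ _
  linarith

/-- **Compact metric spaces with mutually surjective 1-Lipschitz maps are isometric.**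
If `(X, d_X)` and `(Y, d_Y)` are compact metric spaces and there exist surjective
1-Lipschitz maps `Φ : X → Y` and `Ψ : Y → X`, then `X` and `Y` are isometric. -/
theorem isometric_of_surjective_nonexpansive
    {X Y : Type} [MetricSpace X] [MetricSpace Y] [CompactSpace X] [CompactSpace Y]
    (Φ : X → Y) (Ψ : Y → X)
    (hΦ_surj : Function.Surjective Φ) (hΦ_lip : LipschitzWith 1 Φ)
    (hΨ_surj : Function.Surjective Ψ) (hΨ_lip : LipschitzWith 1 Ψ) :
    Nonempty (X ≃ᵢ Y) := by
  have hT : Isometry (Ψ ∘ Φ) :=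
    isometry_of_surjective_lipschitzWith_one (Ψ ∘ Φ)
      (hΨ_surj.comp hΦ_surj) (by simpa using hΨ_lip.comp hΦ_lip)
  have hΦ_isom : Isometry Φ := by
    apply Isometry.of_dist_eq
    intro u v
    refine le_antisymm (by simpa using hΦ_lip.dist_le_mul u v) ?_
    calc dist u v = dist (Ψ (Φ u)) (Ψ (Φ v)) := (hT.dist_eq u v).symm
      _ ≤ dist (Φ u) (Φ v) := by simpa using hΨ_lip.dist_le_mul (Φ u) (Φ v)
  exact ⟨⟨Equiv.ofBijective Φ ⟨hΦ_isom.injective, hΦ_surj⟩, hΦ_isom⟩⟩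

end
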